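/- The EFIC criterion is not invariant to data scaling: for any scaling constant C > 0 and any two supports I ≠ S with card(I) = k and card(S) = k₀, writing Δ = k − k₀ and D_EFIC = EFIC(I) − EFIC(S) computed from data y, the difference computed from the scaled data Cy satisfies EFIC(I; Cy) − EFIC(S; Cy) = D_EFIC − Δ ln C². Hence scaling changes the EFIC score difference by the additive term −Δ ln C² whenever k ≠ k₀. -/

import Mathlib

open Matrix

noncomputable section

/-- Submatrix of columns of `A` indexed by the finite support `I`. -/
def subCols {N : ℕ} {ι : Type*} (A : Matrix (Fin N) ι ℝ) (I : Finset ι) :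
    Matrix (Fin N) ↥I ℝ := fun n i => A n i.1

/-- Orthogonal projection onto the column span of `A_I`. -/
def proj {N : ℕ} {ι : Type*} [DecidableEq ι] (A : Matrix (Fin N) ι ℝ) (I : Finset ι) :
    Matrix (Fin N) (Fin N) ℝ :=
  subCols A I * ((subCols A I)ᵀ * subCols A I)⁻¹ * (subCols A I)ᵀ

/-- Orthogonal projection onto the orthogonal complement of the column span of `A_I`. -/
def projPerp {N : ℕ} {ι : Type*} [DecidableEq ι] (A : Matrix (Fin N) ι ℝ) (I : Finset ι) :
    Matrix (Fin N) (Fin N) ℝ := 1 - proj A I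

open Real

/-- The EFIC criterion. -/
def EFIC {N : ℕ} {ι : Type*} [DecidableEq ι] (A : Matrix (Fin N) ι ℝ) (p : ℕ) (c : ℝ)
    (I : Finset ι) (y : Fin N → ℝ) : ℝ :=
  N * log ((projPerp A I *ᵥ y) ⬝ᵥ (projPerp A I *ᵥ y)) + I.card * log N
    + log ((subCols A I)ᵀ * subCols A I).det
    - ((I.card : ℝ) + 2) * log ((projPerp A I *ᵥ y) ⬝ᵥ (projPerp A I *ᵥ y))
    + 2 * c * I.card * log p

theorem Matrix.log_dotProduct_self_smul {n : Type*} [Fintype n] {v : n → ℝ} (hv : v ≠ 0)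
    {C : ℝ} (hC : C ≠ 0) :
    log ((C • v) ⬝ᵥ (C • v)) = log (C ^ 2) + log (v ⬝ᵥ v) := by
  rw [smul_dotProduct, dotProduct_smul, smul_smul, smul_eq_mul, ← sq,
    log_mul (pow_ne_zero 2 hC) (mt dotProduct_self_eq_zero.mp hv)]

theorem EFIC_smul {N : ℕ} {ι : Type*} [DecidableEq ι] (A : Matrix (Fin N) ι ℝ) (p : ℕ) (c : ℝ)
    (I : Finset ι) {y : Fin N → ℝ} (hy : projPerp A I *ᵥ y ≠ 0) {C : ℝ} (hC : C ≠ 0) :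
    EFIC A p c I (C • y)
      = EFIC A p c I y + ((N : ℝ) - ((I.card : ℝ) + 2)) * log (C ^ 2) := by
  simp only [EFIC, mulVec_smul, log_dotProduct_self_smul hy hC]
  ring

theorem efic_not_scale_invariant_general {N p : ℕ}
    (A : Matrix (Fin N) (Fin p) ℝ) (c : ℝ)
    (I S : Finset (Fin p))
    (y : Fin N → ℝ)
    (hyI : projPerp A I *ᵥ y ≠ 0) (hyS : projPerp A S *ᵥ y ≠ 0)
    (C : ℝ) (hC : 0 < C) :
    EFIC A p c I (C • y) - EFIC A p c S (C • y)
      = (EFIC A p c I y - EFIC A p c S y)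
        - ((I.card : ℝ) - (S.card : ℝ)) * log (C ^ 2) := by
  rw [EFIC_smul A p c I hyI hC.ne', EFIC_smul A p c S hyS hC.ne']
  ring

/-- **EFIC is not invariant to data scaling.** For supports `I ≠ S` with `card I = k`,
`card S = k₀`, `Δ = k − k₀`, and scaling constant `C > 0`, the EFIC score difference
computed from `C • y` equals `D_EFIC − Δ ln C²`, where `D_EFIC` is the difference computed
from `y`; scaling changes the difference by `−Δ ln C²` whenever `k ≠ k₀`. -/
theorem efic_not_scale_invariant {N p : ℕ} (hN : 0 < N)
    (A : Matrix (Fin N) (Fin p) ℝ) (c : ℝ) (hc : 0 < c)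
    (I S : Finset (Fin p)) (hIS : I ≠ S)
    (y : Fin N → ℝ)
    (hyI : projPerp A I *ᵥ y ≠ 0) (hyS : projPerp A S *ᵥ y ≠ 0)
    (C : ℝ) (hC : 0 < C) :
    EFIC A p c I (C • y) - EFIC A p c S (C • y)
      = (EFIC A p c I y - EFIC A p c S y)
        - ((I.card : ℝ) - (S.card : ℝ)) * log (C ^ 2) :=
  efic_not_scale_invariant_general A c I S y hyI hyS C hC

end
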